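/- arXiv:1603.01687 — 8 statements merged into one kernel-verified Lean document; each statement's English description precedes it below -/
import Mathlib

section
/- If n ≥ 3, then the set π is path-connected: any two points of π can be joined by a continuous path lying entirely in π. -/
open Finset

/-- The degree of vertex `i`, as a real number. -/
noncomputable def dd {n : ℕ} (G : SimpleGraph (Fin n)) [DecidableRel G.Adj] (i : Fin n) : ℝ :=
  (G.degree i : ℝ)

/-- The weighted 1-norm `‖x‖_{1,d} = Σ_i d_i |x_i|`. -/
noncomputable def norm1d {n : ℕ} (G : SimpleGraph (Fin n)) [DecidableRel G.Adj]
    (x : Fin n → ℝ) : ℝ :=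
  ∑ i, dd G i * |x i|

/-- `δ₊(x) = Σ_{i : x_i > 0} d_i`. -/
noncomputable def deltaP {n : ℕ} (G : SimpleGraph (Fin n)) [DecidableRel G.Adj]
    (x : Fin n → ℝ) : ℝ :=
  ∑ i, if 0 < x i then dd G i else 0

/-- `δ₋(x) = Σ_{i : x_i < 0} d_i`. -/
noncomputable def deltaM {n : ℕ} (G : SimpleGraph (Fin n)) [DecidableRel G.Adj]
    (x : Fin n → ℝ) : ℝ :=
  ∑ i, if x i < 0 then dd G i else 0

/-- `δ₀(x) = Σ_{i : x_i = 0} d_i`. -/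
noncomputable def delta0 {n : ℕ} (G : SimpleGraph (Fin n)) [DecidableRel G.Adj]
    (x : Fin n → ℝ) : ℝ :=
  ∑ i, if x i = 0 then dd G i else 0

/-- `δ = Σ_i d_i`. -/
noncomputable def deltaTot {n : ℕ} (G : SimpleGraph (Fin n)) [DecidableRel G.Adj] : ℝ :=
  ∑ i, dd G i

/-- The set `X = {x : ‖x‖_{1,d} = 1}`. -/
def Xset {n : ℕ} (G : SimpleGraph (Fin n)) [DecidableRel G.Adj] : Set (Fin n → ℝ) :=
  {x | norm1d G x = 1}

/-- The feasible set `π = {x ∈ X : |δ₊(x) − δ₋(x)| ≤ δ₀(x)}`. -/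
def piSet {n : ℕ} (G : SimpleGraph (Fin n)) [DecidableRel G.Adj] : Set (Fin n → ℝ) :=
  {x | norm1d G x = 1 ∧ |deltaP G x - deltaM G x| ≤ delta0 G x}

/-!
Since `δ₊ + δ₋ + δ₀ = δ`, the condition `|δ₊ − δ₋| ≤ δ₀` says `2δ₊ ≤ δ` and `2δ₋ ≤ δ`. It only
depends on the sign pattern of `x`, so it is invariant under positive scaling, and it holds when `x`
has at most one positive and at most one negative coordinate, because `2dᵢ ≤ δ` by the degree-sum
formula. Hence it suffices to join points in the cone of nonzero balanced vectors and renormalise.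
In that cone `x` is joined by a segment to `xᵢ eᵢ` whenever `xᵢ ≠ 0`, and `a eᵢ` to `b eⱼ` whenever
`i ≠ j` and `ab < 0`. For `n ≥ 3` a third index is always available, and these segments join any
two nonzero multiples of basis vectors.
-/

section

variable {n : ℕ} (G : SimpleGraph (Fin n)) [DecidableRel G.Adj]

def IsBalanced (x : Fin n → ℝ) : Prop :=
  |deltaP G x - deltaM G x| ≤ delta0 G x

def balancedCone : Set (Fin n → ℝ) :=
  {x | x ≠ 0 ∧ IsBalanced G x}

lemma dd_nonneg (i : Fin n) : 0 ≤ dd G i :=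
  Nat.cast_nonneg _

lemma two_mul_dd_le_deltaTot (i : Fin n) : 2 * dd G i ≤ deltaTot G := by
  have h : 2 * G.degree i ≤ ∑ v, G.degree v := by
    rw [G.sum_degrees_eq_twice_card_edges]
    exact Nat.mul_le_mul_left 2 (G.degree_le_card_edgeFinset i)
  have h' := (Nat.cast_le (α := ℝ)).2 h
  push_cast at h'
  exact h'

lemma deltaP_add_deltaM_add_delta0 (x : Fin n → ℝ) :
    deltaP G x + deltaM G x + delta0 G x = deltaTot G := by
  simp only [deltaP, deltaM, delta0, deltaTot, ← sum_add_distrib]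
  refine sum_congr rfl fun i _ => ?_
  rcases lt_trichotomy (x i) 0 with h | h | h
  · simp [h, h.ne, h.not_gt]
  · simp [h]
  · simp [h, h.ne', h.not_gt]

lemma isBalanced_iff (x : Fin n → ℝ) :
    IsBalanced G x ↔ 2 * deltaP G x ≤ deltaTot G ∧ 2 * deltaM G x ≤ deltaTot G := by
  have h := deltaP_add_deltaM_add_delta0 G x
  rw [IsBalanced, abs_le]
  constructor <;> rintro ⟨h₁, h₂⟩ <;> constructor <;> linarith

lemma deltaM_eq_deltaP_neg (x : Fin n → ℝ) : deltaM G x = deltaP G (-x) := by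
  simp [deltaM, deltaP]

lemma deltaP_le_dd {x : Fin n → ℝ} {i : Fin n} (hx : ∀ k ≠ i, x k ≤ 0) :
    deltaP G x ≤ dd G i := by
  rw [deltaP, ← sum_filter, ← sum_singleton (dd G) i]
  refine sum_le_sum_of_subset_of_nonneg (fun k hk => ?_) fun k _ _ => dd_nonneg G k
  by_contra hki
  exact (hx k (mem_singleton.not.1 hki)).not_gt (mem_filter.1 hk).2

lemma isBalanced_of_nonpos_of_nonneg {x : Fin n → ℝ} {i j : Fin n}
    (hi : ∀ k ≠ i, x k ≤ 0) (hj : ∀ k ≠ j, 0 ≤ x k) : IsBalanced G x := by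
  have hP := deltaP_le_dd G hi
  have hM : deltaM G x ≤ dd G j := by
    rw [deltaM_eq_deltaP_neg]
    exact deltaP_le_dd G fun k hk => neg_nonpos.2 (hj k hk)
  rw [isBalanced_iff]
  constructor <;> linarith [two_mul_dd_le_deltaTot G i, two_mul_dd_le_deltaTot G j]

lemma isBalanced_congr {x y : Fin n → ℝ} (h : ∀ k, SignType.sign (x k) = SignType.sign (y k)) :
    IsBalanced G x ↔ IsBalanced G y := by
  have hP : deltaP G x = deltaP G y := sum_congr rfl fun k _ =>
    if_congr (by rw [← sign_eq_one_iff, h k, sign_eq_one_iff]) rfl rfl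
  have hM : deltaM G x = deltaM G y := sum_congr rfl fun k _ =>
    if_congr (by rw [← sign_eq_neg_one_iff, h k, sign_eq_neg_one_iff]) rfl rfl
  have h₀ : delta0 G x = delta0 G y := sum_congr rfl fun k _ =>
    if_congr (by rw [← sign_eq_zero_iff, h k, sign_eq_zero_iff]) rfl rfl
  rw [IsBalanced, IsBalanced, hP, hM, h₀]

lemma isBalanced_smul {c : ℝ} (hc : 0 < c) {x : Fin n → ℝ} (hx : IsBalanced G x) :
    IsBalanced G (c • x) :=
  (isBalanced_congr G fun k => by simp [sign_mul, sign_pos hc]).2 hx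

lemma joinedIn_balancedCone_single {x : Fin n → ℝ} (hx : x ∈ balancedCone G) {i : Fin n}
    (hi : x i ≠ 0) : JoinedIn (balancedCone G) x (Pi.single i (x i)) := by
  refine JoinedIn.of_segment_subset ?_
  rintro _ ⟨α, β, hα, -, hαβ, rfl⟩
  have hz_i : (α • x + β • Pi.single i (x i) : Fin n → ℝ) i = x i := by
    simp only [Pi.add_apply, Pi.smul_apply, Pi.single_eq_same, smul_eq_mul]
    linear_combination x i * hαβ
  have hz_ne : ∀ k ≠ i, (α • x + β • Pi.single i (x i) : Fin n → ℝ) k = α * x k := by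
    intro k hk
    simp [hk]
  refine ⟨fun h => hi (hz_i ▸ congr_fun h i), ?_⟩
  rcases hα.eq_or_lt with rfl | hα
  · exact isBalanced_of_nonpos_of_nonneg G (i := i) (j := i)
      (fun k hk => by rw [hz_ne k hk, zero_mul]) (fun k hk => by rw [hz_ne k hk, zero_mul])
  · refine (isBalanced_congr G fun k => ?_).2 hx.2
    by_cases hk : k = i
    · rw [hk, hz_i]
    · rw [hz_ne k hk, sign_mul, sign_pos hα, one_mul]

lemma joinedIn_balancedCone_single_single_of_mul_neg {i j : Fin n} (hij : i ≠ j) {a b : ℝ}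
    (hab : a * b < 0) : JoinedIn (balancedCone G) (Pi.single i a) (Pi.single j b) := by
  wlog ha : 0 < a generalizing i j a b
  · exact (this hij.symm (by rwa [mul_comm]) (pos_of_mul_neg_right hab (not_lt.1 ha))).symm
  have hb : b < 0 := neg_of_mul_neg_right hab ha.le
  refine JoinedIn.of_segment_subset ?_
  rintro _ ⟨α, β, hα, hβ, hαβ, rfl⟩
  have hz : ∀ k, (α • Pi.single i a + β • Pi.single j b : Fin n → ℝ) k =
      (if k = i then α * a else 0) + (if k = j then β * b else 0) := by
    intro k
    simp only [Pi.add_apply, Pi.smul_apply, Pi.single_apply, smul_eq_mul, mul_ite, mul_zero]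
  refine ⟨fun h => ?_, isBalanced_of_nonpos_of_nonneg G (i := i) (j := j) ?_ ?_⟩
  · have hzi := congr_fun h i
    have hzj := congr_fun h j
    simp only [hz, if_pos, if_neg hij, if_neg hij.symm, Pi.zero_apply, add_zero, zero_add,
      mul_eq_zero, ha.ne', hb.ne, or_false] at hzi hzj
    linarith
  · intro k hk
    rw [hz, if_neg hk, zero_add]
    split_ifs
    exacts [mul_nonpos_of_nonneg_of_nonpos hβ hb.le, le_rfl]
  · intro k hk
    rw [hz, if_neg hk, add_zero]
    split_ifs
    exacts [mul_nonneg hα ha.le, le_rfl]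

lemma joinedIn_balancedCone_single_single_of_mul_pos (hn : 3 ≤ n) (i j : Fin n) {a b : ℝ}
    (hab : 0 < a * b) : JoinedIn (balancedCone G) (Pi.single i a) (Pi.single j b) := by
  obtain ⟨k, hki, hkj⟩ := Fin.exists_ne_and_ne_of_two_lt i j hn
  have ha : a ≠ 0 := left_ne_zero_of_mul hab.ne'
  have h₁ : a * -a < 0 := by rw [mul_neg]; exact neg_neg_of_pos (mul_self_pos.2 ha)
  have h₂ : -a * b < 0 := by rw [neg_mul]; exact neg_neg_of_pos hab
  exact (joinedIn_balancedCone_single_single_of_mul_neg G hki.symm h₁).trans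
    (joinedIn_balancedCone_single_single_of_mul_neg G hkj h₂)

lemma joinedIn_balancedCone_single_single (hn : 3 ≤ n) (i j : Fin n) {a b : ℝ} (ha : a ≠ 0)
    (hb : b ≠ 0) : JoinedIn (balancedCone G) (Pi.single i a) (Pi.single j b) := by
  rcases (mul_ne_zero ha hb).lt_or_gt with hab | hab
  · by_cases hij : i = j
    · subst hij
      obtain ⟨k, hki, -⟩ := Fin.exists_ne_and_ne_of_two_lt i i hn
      exact (joinedIn_balancedCone_single_single_of_mul_neg G hki.symm hab).trans
        (joinedIn_balancedCone_single_single_of_mul_pos G hn k i (mul_self_pos.2 hb))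
    · exact joinedIn_balancedCone_single_single_of_mul_neg G hij hab
  · exact joinedIn_balancedCone_single_single_of_mul_pos G hn i j hab

lemma continuous_norm1d : Continuous (norm1d G) :=
  continuous_finsetSum _ fun i _ => continuous_const.mul (continuous_apply i).abs

lemma norm1d_pos (hd : ∀ i, 0 < dd G i) {x : Fin n → ℝ} (hx : x ≠ 0) : 0 < norm1d G x := by
  obtain ⟨k, hk⟩ := Function.ne_iff.1 hx
  exact sum_pos' (fun i _ => mul_nonneg (dd_nonneg G i) (abs_nonneg _))
    ⟨k, mem_univ k, mul_pos (hd k) (abs_pos.2 hk)⟩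

lemma norm1d_smul {c : ℝ} (hc : 0 ≤ c) (x : Fin n → ℝ) :
    norm1d G (c • x) = c * norm1d G x := by
  simp only [norm1d, mul_sum, Pi.smul_apply, smul_eq_mul, abs_mul, abs_of_nonneg hc]
  exact sum_congr rfl fun i _ => by ring

lemma ne_zero_of_mem_piSet {x : Fin n → ℝ} (hx : x ∈ piSet G) : x ≠ 0 := by
  rintro rfl
  simp [piSet, norm1d] at hx

lemma joinedIn_piSet_of_joinedIn_balancedCone (hd : ∀ i, 0 < dd G i) {x y : Fin n → ℝ}
    (hx : norm1d G x = 1) (hy : norm1d G y = 1) (h : JoinedIn (balancedCone G) x y) :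
    JoinedIn (piSet G) x y := by
  have hpos : ∀ z ∈ balancedCone G, 0 < norm1d G z := fun z hz => norm1d_pos G hd hz.1
  have hcont : ContinuousOn (fun z => (norm1d G z)⁻¹ • z) (balancedCone G) :=
    ((continuous_norm1d G).continuousOn.inv₀ fun z hz => (hpos z hz).ne').smul continuousOn_id
  have h' := h.map_continuousOn hcont
  simp only [hx, hy, inv_one, one_smul] at h'
  refine h'.mono ?_
  rintro _ ⟨z, hz, rfl⟩
  have hc := inv_pos.2 (hpos z hz)
  exact ⟨by rw [norm1d_smul G hc.le, inv_mul_cancel₀ (hpos z hz).ne'], isBalanced_smul G hc hz.2⟩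

end

/-- If `n ≥ 3`, the set `π` is path-connected: any two of its points can be joined by a
continuous path lying entirely in `π`. -/
theorem stmt1 {n : ℕ} (G : SimpleGraph (Fin n)) [DecidableRel G.Adj]
    (hd : ∀ i, 0 < dd G i) (hn : 3 ≤ n) :
    ∀ x ∈ piSet G, ∀ y ∈ piSet G, JoinedIn (piSet G) x y := by
  intro x hx y hy
  have hx₀ := ne_zero_of_mem_piSet G hx
  have hy₀ := ne_zero_of_mem_piSet G hy
  obtain ⟨i, hi⟩ := Function.ne_iff.1 hx₀
  obtain ⟨j, hj⟩ := Function.ne_iff.1 hy₀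
  refine joinedIn_piSet_of_joinedIn_balancedCone G hd hx.1 hy.1 ?_
  exact (joinedIn_balancedCone_single G ⟨hx₀, hx.2⟩ hi).trans
    ((joinedIn_balancedCone_single_single G hn i j hi hj).trans
      (joinedIn_balancedCone_single G ⟨hy₀, hy.2⟩ hj).symm)
end

section
/- Suppose x, y ∈ X satisfy the sign-preserving property (for all i: x_i = 0 implies y_i = 0; x_i < 0 implies y_i ≤ 0; x_i > 0 implies y_i ≥ 0) and the order-preserving property (for all i, j: x_i = x_j implies y_i = y_j; x_i < x_j implies y_i ≤ y_j). If (μ, x) is an eigenpair of the graph 1-Laplacian Δ₁, then for every t ∈ [0,1], the vector t·x + (1−t)·y lies in X and (μ, t·x + (1−t)·y) is also an eigenpair of Δ₁. -/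
/-!
Write `w = t x + (1 - t) y`. Sign preservation makes `t x_i` and `(1 - t) y_i` never of opposite
signs, so `‖w‖_{1,d} = t ‖x‖_{1,d} + (1 - t) ‖y‖_{1,d} = 1`; together with order preservation it
also gives `Sgn(x_i) ⊆ Sgn(w_i)` and `Sgn(x_i - x_j) ⊆ Sgn(w_i - w_j)`. Hence the very
witnesses `z_{ij}` and `s_i` certifying that `(μ, x)` is an eigenpair certify it for `(μ, w)`.
-/

open Finset

/-- The set-valued sign: `Sgn(t) = {1}` if `t > 0`, `{−1}` if `t < 0`, `[−1,1]` if `t = 0`. -/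
noncomputable def sgnSet (t : ℝ) : Set ℝ :=
  if 0 < t then {1} else if t < 0 then {-1} else Set.Icc (-1) 1

/-- `(μ, x)` is an eigenpair of the graph 1-Laplacian `Δ₁`: `x ∈ X` and there exist reals
`z_{ij}` for adjacent pairs with `z_{ij} ∈ Sgn(x_i − x_j)`, `z_{ji} = −z_{ij}`, and
`Σ_{j∼i} z_{ij} ∈ μ d_i Sgn(x_i)` for every vertex `i`. -/
noncomputable def IsEigenpair {n : ℕ} (G : SimpleGraph (Fin n)) [DecidableRel G.Adj]
    (μ : ℝ) (x : Fin n → ℝ) : Prop :=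
  norm1d G x = 1 ∧
  ∃ z : Fin n → Fin n → ℝ,
    (∀ i j, G.Adj i j → z i j ∈ sgnSet (x i - x j)) ∧
    (∀ i j, G.Adj i j → z j i = - z i j) ∧
    (∀ i, ∃ s ∈ sgnSet (x i), (∑ j ∈ G.neighborFinset i, z i j) = μ * dd G i * s)


lemma one_mem_sgnSet {u : ℝ} (h : 0 ≤ u) : 1 ∈ sgnSet u := by
  rcases h.lt_or_eq with h | rfl
  · simp [sgnSet, h]
  · simp [sgnSet]

lemma neg_one_mem_sgnSet {u : ℝ} (h : u ≤ 0) : -1 ∈ sgnSet u := by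
  rcases h.lt_or_eq with h | rfl
  · simp [sgnSet, h, h.not_gt]
  · simp [sgnSet]

def SignFollows (b c : ℝ) : Prop :=
  (b = 0 → c = 0) ∧ (b < 0 → c ≤ 0) ∧ (0 < b → 0 ≤ c)

namespace SignFollows

variable {b c t : ℝ}

lemma sgnSet_subset (h : SignFollows b c) : sgnSet b ⊆ sgnSet c := by
  obtain ⟨hzero, hneg, hpos⟩ := h
  rcases lt_trichotomy b 0 with hb | rfl | hb
  · rw [sgnSet, if_neg hb.not_gt, if_pos hb, Set.singleton_subset_iff]
    exact neg_one_mem_sgnSet (hneg hb)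
  · rw [hzero rfl]
  · rw [sgnSet, if_pos hb, Set.singleton_subset_iff]
    exact one_mem_sgnSet (hpos hb)

lemma convex_comb (h : SignFollows b c) (ht0 : 0 ≤ t) (ht1 : t ≤ 1) :
    SignFollows b (t * b + (1 - t) * c) := by
  obtain ⟨hzero, hneg, hpos⟩ := h
  refine ⟨fun hb => ?_, fun hb => ?_, fun hb => ?_⟩
  · simp [hb, hzero hb]
  · nlinarith [hneg hb]
  · nlinarith [hpos hb]

lemma abs_convex_comb (h : SignFollows b c) (ht0 : 0 ≤ t) (ht1 : t ≤ 1) :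
    |t * b + (1 - t) * c| = t * |b| + (1 - t) * |c| := by
  obtain ⟨hzero, hneg, hpos⟩ := h
  have ht1' : 0 ≤ 1 - t := sub_nonneg.mpr ht1
  rw [(abs_add_eq_add_abs_iff _ _).mpr ?_, abs_mul, abs_mul, abs_of_nonneg ht0, abs_of_nonneg ht1']
  rcases lt_trichotomy b 0 with hb | rfl | hb
  · exact Or.inr ⟨mul_nonpos_of_nonneg_of_nonpos ht0 hb.le,
      mul_nonpos_of_nonneg_of_nonpos ht1' (hneg hb)⟩
  · simp [hzero rfl]
  · exact Or.inl ⟨mul_nonneg ht0 hb.le, mul_nonneg ht1' (hpos hb)⟩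

lemma sub_of_order {n : ℕ} {x y : Fin n → ℝ}
    (horder : ∀ i j, (x i = x j → y i = y j) ∧ (x i < x j → y i ≤ y j)) (i j : Fin n) :
    SignFollows (x i - x j) (y i - y j) := by
  refine ⟨fun h => ?_, fun h => ?_, fun h => ?_⟩
  · rw [(horder i j).1 (sub_eq_zero.mp h), sub_self]
  · exact sub_nonpos.mpr ((horder i j).2 (sub_neg.mp h))
  · exact sub_nonneg.mpr ((horder j i).2 (sub_pos.mp h))

end SignFollows

section

variable {n : ℕ} {G : SimpleGraph (Fin n)} [DecidableRel G.Adj]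

lemma norm1d_convex_comb {x y : Fin n → ℝ} (hsign : ∀ i, SignFollows (x i) (y i))
    {t : ℝ} (ht0 : 0 ≤ t) (ht1 : t ≤ 1) :
    norm1d G (fun i => t * x i + (1 - t) * y i) = t * norm1d G x + (1 - t) * norm1d G y := by
  simp only [norm1d, (hsign _).abs_convex_comb ht0 ht1, Finset.mul_sum, ← Finset.sum_add_distrib]
  exact Finset.sum_congr rfl fun i _ => by ring

lemma IsEigenpair.of_sgnSet_subset {μ : ℝ} {x w : Fin n → ℝ} (hpair : IsEigenpair G μ x)
    (hw : norm1d G w = 1) (hvertex : ∀ i, sgnSet (x i) ⊆ sgnSet (w i))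
    (hedge : ∀ i j, G.Adj i j → sgnSet (x i - x j) ⊆ sgnSet (w i - w j)) :
    IsEigenpair G μ w := by
  obtain ⟨-, z, hz, hanti, hsum⟩ := hpair
  refine ⟨hw, z, fun i j hij => hedge i j hij (hz i j hij), hanti, fun i => ?_⟩
  obtain ⟨s, hs, heq⟩ := hsum i
  exact ⟨s, hvertex i hs, heq⟩

end

theorem stmt5_general {n : ℕ} (G : SimpleGraph (Fin n)) [DecidableRel G.Adj]
    (μ : ℝ) (x y : Fin n → ℝ)
    (hx : x ∈ Xset G) (hy : y ∈ Xset G)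
    (hsign : ∀ i, (x i = 0 → y i = 0) ∧ (x i < 0 → y i ≤ 0) ∧ (0 < x i → 0 ≤ y i))
    (horder : ∀ i j, (x i = x j → y i = y j) ∧ (x i < x j → y i ≤ y j))
    (hpair : IsEigenpair G μ x) :
    ∀ t ∈ Set.Icc (0 : ℝ) 1,
      (fun i => t * x i + (1 - t) * y i) ∈ Xset G ∧
      IsEigenpair G μ (fun i => t * x i + (1 - t) * y i) := by
  rintro t ⟨ht0, ht1⟩
  have hnorm : norm1d G (fun i => t * x i + (1 - t) * y i) = 1 := by
    rw [norm1d_convex_comb hsign ht0 ht1, show norm1d G x = 1 from hx,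
      show norm1d G y = 1 from hy]
    ring
  refine ⟨hnorm, hpair.of_sgnSet_subset hnorm (fun i => ?_) (fun i j _ => ?_)⟩
  · exact (SignFollows.convex_comb (hsign i) ht0 ht1).sgnSet_subset
  · have hdiff := (SignFollows.sub_of_order horder i j).convex_comb ht0 ht1
    convert hdiff.sgnSet_subset using 2
    ring

/-- If `x, y ∈ X` satisfy the sign-preserving and order-preserving properties and `(μ, x)` is
an eigenpair of `Δ₁`, then for every `t ∈ [0,1]` the vector `t·x + (1−t)·y` lies in `X` and
`(μ, t·x + (1−t)·y)` is also an eigenpair of `Δ₁`. -/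
theorem stmt5 {n : ℕ} (G : SimpleGraph (Fin n)) [DecidableRel G.Adj]
    (hd : ∀ i, 0 < dd G i) (μ : ℝ) (x y : Fin n → ℝ)
    (hx : x ∈ Xset G) (hy : y ∈ Xset G)
    (hsign : ∀ i, (x i = 0 → y i = 0) ∧ (x i < 0 → y i ≤ 0) ∧ (0 < x i → 0 ≤ y i))
    (horder : ∀ i j, (x i = x j → y i = y j) ∧ (x i < x j → y i ≤ y j))
    (hpair : IsEigenpair G μ x) :
    ∀ t ∈ Set.Icc (0 : ℝ) 1,
      (fun i => t * x i + (1 - t) * y i) ∈ Xset G ∧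
      IsEigenpair G μ (fun i => t * x i + (1 - t) * y i) :=
  stmt5_general G μ x y hx hy hsign horder hpair
end

section
/- Every eigenvalue μ of the graph 1-Laplacian Δ₁ satisfies 0 ≤ μ ≤ 1. -/
open Finset

/-!
Pairing the eigen-equation at `i` with `x_i` and summing gives `μ = Σ_i x_i Σ_{j∼i} z_{ij}`
(using `x_i s_i = |x_i|` and `‖x‖_{1,d} = 1`). Antisymmetry of `z` turns this sum into
`½ Σ_{i∼j} z_{ij} (x_i − x_j) = ½ Σ_{i∼j} |x_i − x_j|`, summed over ordered adjacent pairs,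
which lies between `0` and `½ Σ_{i∼j} (|x_i| + |x_j|) = ‖x‖_{1,d} = 1`.
-/

lemma mul_eq_abs_of_mem_sgnSet {t s : ℝ} (hs : s ∈ sgnSet t) : t * s = |t| := by
  unfold sgnSet at hs
  split_ifs at hs with hpos hneg
  · rw [Set.mem_singleton_iff.1 hs, abs_of_pos hpos, mul_one]
  · rw [Set.mem_singleton_iff.1 hs, abs_of_neg hneg, mul_neg_one]
  · simp [le_antisymm (not_lt.1 hpos) (not_lt.1 hneg)]

section Graph

variable {n : ℕ} (G : SimpleGraph (Fin n)) [DecidableRel G.Adj]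

lemma sum_neighborFinset_comm (g : Fin n → Fin n → ℝ) :
    ∑ i, ∑ j ∈ G.neighborFinset i, g i j = ∑ i, ∑ j ∈ G.neighborFinset i, g j i :=
  Finset.sum_comm' fun i j => by simp [G.adj_comm]

lemma sum_neighborFinset_const (x : Fin n → ℝ) :
    ∑ i, ∑ _j ∈ G.neighborFinset i, |x i| = norm1d G x := by
  simp [norm1d, dd, SimpleGraph.card_neighborFinset_eq_degree]

/-- Each edge is counted twice, once for each orientation. -/
noncomputable def totalVariation (x : Fin n → ℝ) : ℝ :=
  ∑ i, ∑ j ∈ G.neighborFinset i, |x i - x j|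

lemma totalVariation_nonneg (x : Fin n → ℝ) : 0 ≤ totalVariation G x :=
  Finset.sum_nonneg fun _ _ => Finset.sum_nonneg fun _ _ => abs_nonneg _

lemma totalVariation_le_two_mul_norm1d (x : Fin n → ℝ) :
    totalVariation G x ≤ 2 * norm1d G x :=
  calc totalVariation G x
      ≤ ∑ i, ∑ j ∈ G.neighborFinset i, (|x i| + |x j|) :=
        Finset.sum_le_sum fun _ _ => Finset.sum_le_sum fun _ _ => abs_sub _ _
    _ = ∑ i, ∑ j ∈ G.neighborFinset i, |x i| + ∑ i, ∑ j ∈ G.neighborFinset i, |x j| := by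
        simp only [Finset.sum_add_distrib]
    _ = 2 * norm1d G x := by
        rw [← sum_neighborFinset_comm G fun i _ => |x i|, sum_neighborFinset_const]; ring

lemma sum_neighborFinset_mul_sub_of_antisymm {z : Fin n → Fin n → ℝ}
    (hz : ∀ i j, G.Adj i j → z j i = -z i j) (x : Fin n → ℝ) :
    ∑ i, ∑ j ∈ G.neighborFinset i, z i j * (x i - x j)
      = 2 * ∑ i, x i * ∑ j ∈ G.neighborFinset i, z i j := by
  have hswap := sum_neighborFinset_comm G fun i j => z i j * x i
  calc ∑ i, ∑ j ∈ G.neighborFinset i, z i j * (x i - x j)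
      = ∑ i, ∑ j ∈ G.neighborFinset i, (z i j * x i + z j i * x j) := by
        refine Finset.sum_congr rfl fun i _ => Finset.sum_congr rfl fun j hj => ?_
        rw [hz i j ((G.mem_neighborFinset i j).1 hj)]; ring
    _ = 2 * ∑ i, ∑ j ∈ G.neighborFinset i, z i j * x i := by
        simp only [Finset.sum_add_distrib, ← hswap]; ring
    _ = 2 * ∑ i, x i * ∑ j ∈ G.neighborFinset i, z i j := by
        simp only [Finset.mul_sum, mul_comm]

lemma IsEigenpair.totalVariation_eq {μ : ℝ} {x : Fin n → ℝ} (h : IsEigenpair G μ x) :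
    totalVariation G x = 2 * μ := by
  obtain ⟨hnorm, z, hsgn, hanti, heq⟩ := h
  choose s hs hsum using heq
  calc totalVariation G x
      = ∑ i, ∑ j ∈ G.neighborFinset i, z i j * (x i - x j) := by
        refine Finset.sum_congr rfl fun i _ => Finset.sum_congr rfl fun j hj => ?_
        rw [mul_comm, mul_eq_abs_of_mem_sgnSet (hsgn i j ((G.mem_neighborFinset i j).1 hj))]
    _ = 2 * ∑ i, μ * (dd G i * (x i * s i)) := by
        rw [sum_neighborFinset_mul_sub_of_antisymm G hanti]
        congr 1
        exact Finset.sum_congr rfl fun i _ => by rw [hsum]; ring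
    _ = 2 * μ := by
        simp only [mul_eq_abs_of_mem_sgnSet (hs _), ← Finset.mul_sum]
        rw [← norm1d, hnorm, mul_one]

end Graph

theorem stmt7_general {n : ℕ} (G : SimpleGraph (Fin n)) [DecidableRel G.Adj]
    (μ : ℝ) (h : ∃ x : Fin n → ℝ, IsEigenpair G μ x) :
    0 ≤ μ ∧ μ ≤ 1 := by
  obtain ⟨x, hx⟩ := h
  have htv := hx.totalVariation_eq
  have hle := totalVariation_le_two_mul_norm1d G x
  rw [hx.1] at hle
  constructor <;> linarith [totalVariation_nonneg G x]

/-- Every eigenvalue `μ` of the graph 1-Laplacian satisfies `0 ≤ μ ≤ 1`. -/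
theorem stmt7 {n : ℕ} (G : SimpleGraph (Fin n)) [DecidableRel G.Adj]
    (hd : ∀ i, 0 < dd G i) (μ : ℝ) (h : ∃ x : Fin n → ℝ, IsEigenpair G μ x) :
    0 ≤ μ ∧ μ ≤ 1 :=
  stmt7_general G μ h
end

section
/- If μ and μ̃ are two distinct eigenvalues of the graph 1-Laplacian Δ₁ on a graph with n ≥ 2 vertices, then |μ − μ̃| ≥ 4/(n²(n−1)²). Consequently, Δ₁ has only finitely many eigenvalues. -/
/-!
Let `(μ, x)` be an eigenpair; replacing `x` by `-x` if necessary, some vertex of positive degree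
has `x_i > 0`. Read the `z_{ij}` as an antisymmetric flow along the edges. Summing the eigenvalue
equations over `P = {x > 0}`, where `Sgn(x_i) = 1`, the flow inside `P` cancels and every edge
leaving `P` carries flow `1`, so `μ · vol P = |∂P|`. If `μ ≠ 0`, summing over all vertices gives
`Σ d_i s_i = 0`, whence `vol P ≤ vol Pᶜ`, so `2 vol P ≤ Σ d_i ≤ n(n-1)`; if `μ = 0`, `μ = 0/1`
will do. Hence every eigenvalue is `a / b` with `2b ≤ n(n-1)`, and two distinct such fractions
differ by at least `1/(b b') ≥ 4/(n(n-1))²`.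
-/

open Finset

namespace Finset

variable {ι M : Type*} [AddCommGroup M] {F : ι → ι → M}

theorem sum_sum_eq_zero_of_antisymm [IsAddTorsionFree M] (hF : ∀ i j, F j i = -F i j)
    (S : Finset ι) : ∑ i ∈ S, ∑ j ∈ S, F i j = 0 := by
  refine self_eq_neg.mp ?_
  calc ∑ i ∈ S, ∑ j ∈ S, F i j = ∑ i ∈ S, ∑ j ∈ S, F j i := sum_comm
    _ = -∑ i ∈ S, ∑ j ∈ S, F i j := by
      simp only [← sum_neg_distrib]
      exact sum_congr rfl fun i _ => sum_congr rfl fun j _ => hF i j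

theorem sum_sum_eq_sum_sum_compl_of_antisymm [IsAddTorsionFree M] [Fintype ι] [DecidableEq ι]
    (hF : ∀ i j, F j i = -F i j) (S : Finset ι) :
    ∑ i ∈ S, ∑ j, F i j = ∑ i ∈ S, ∑ j ∈ Sᶜ, F i j := by
  simp only [← sum_add_sum_compl S (F _), sum_add_distrib, sum_sum_eq_zero_of_antisymm hF,
    zero_add]

end Finset

namespace SimpleGraph

variable {V : Type*} [Fintype V] (G : SimpleGraph V) [DecidableRel G.Adj]

def vol (S : Finset V) : ℕ :=
  ∑ i ∈ S, G.degree i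

def cutSize [DecidableEq V] (S : Finset V) : ℕ :=
  ∑ i ∈ S, #{j ∈ Sᶜ | G.Adj i j}

theorem degree_le_vol {S : Finset V} {i : V} (hi : i ∈ S) : G.degree i ≤ G.vol S :=
  single_le_sum (f := fun j => G.degree j) (fun _ _ => zero_le) hi

theorem cutSize_le_vol [DecidableEq V] (S : Finset V) : G.cutSize S ≤ G.vol S := by
  refine sum_le_sum fun i _ => ?_
  rw [← card_neighborFinset_eq_degree, neighborFinset_eq_filter]
  exact card_le_card (filter_subset_filter _ (subset_univ _))

theorem vol_add_vol_compl [DecidableEq V] (S : Finset V) : G.vol S + G.vol Sᶜ = G.vol univ :=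
  sum_add_sum_compl S _

theorem vol_univ_le : (G.vol univ : ℝ) ≤ Fintype.card V * (Fintype.card V - 1) := by
  have hdeg (i : V) : (G.degree i : ℝ) ≤ Fintype.card V - 1 := by
    have : G.degree i + 1 ≤ Fintype.card V := G.degree_lt_card_verts i
    rw [le_sub_iff_add_le]
    exact_mod_cast this
  calc (G.vol univ : ℝ) = ∑ i, (G.degree i : ℝ) := by push_cast [vol]; rfl
    _ ≤ ∑ _i : V, ((Fintype.card V : ℝ) - 1) := sum_le_sum fun i _ => hdeg i
    _ = Fintype.card V * (Fintype.card V - 1) := by simp [mul_sub]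

end SimpleGraph

theorem eq_one_of_mem_sgnSet {t s : ℝ} (ht : 0 < t) (h : s ∈ sgnSet t) : s = 1 := by
  simpa [sgnSet, ht] using h

theorem abs_le_one_of_mem_sgnSet {t s : ℝ} (h : s ∈ sgnSet t) : |s| ≤ 1 := by
  unfold sgnSet at h
  split_ifs at h
  · simp_all
  · simp_all
  · exact abs_le.mpr h

theorem neg_mem_sgnSet_neg {t s : ℝ} (h : s ∈ sgnSet t) : -s ∈ sgnSet (-t) := by
  rcases lt_trichotomy t 0 with ht | rfl | ht
  · simp_all [sgnSet, ht.not_gt]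
  · simp only [sgnSet, neg_zero, lt_irrefl, if_false, Set.mem_Icc] at h ⊢
    exact ⟨by linarith, by linarith⟩
  · simp_all [sgnSet, ht.not_gt]

section Eigenpair

variable {n : ℕ} {G : SimpleGraph (Fin n)} [DecidableRel G.Adj] {μ : ℝ} {x : Fin n → ℝ}

theorem IsEigenpair.neg (h : IsEigenpair G μ x) : IsEigenpair G μ (-x) := by
  obtain ⟨hx, z, hz, hanti, hsum⟩ := h
  refine ⟨by simpa [norm1d] using hx, fun i j => z j i, fun i j hij => ?_,
    fun i j hij => by beta_reduce; rw [hanti i j hij, neg_neg], fun i => ?_⟩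
  · rw [Pi.neg_apply, Pi.neg_apply, neg_sub_neg]
    exact hz j i hij.symm
  · obtain ⟨s, hs, hs_sum⟩ := hsum i
    refine ⟨-s, neg_mem_sgnSet_neg hs, ?_⟩
    calc ∑ j ∈ G.neighborFinset i, z j i = ∑ j ∈ G.neighborFinset i, -z i j :=
          sum_congr rfl fun j hj => hanti i j ((G.mem_neighborFinset i j).mp hj)
      _ = μ * dd G i * -s := by rw [sum_neg_distrib, hs_sum, mul_neg]

theorem IsEigenpair.exists_eigenpair_pos_at_pos_degree (h : IsEigenpair G μ x) :
    ∃ y, IsEigenpair G μ y ∧ ∃ i, 0 < y i ∧ 0 < G.degree i := by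
  have hnorm : ∑ i, dd G i * |x i| ≠ 0 := by
    change norm1d G x ≠ 0
    rw [h.1]
    exact one_ne_zero
  obtain ⟨i, -, hi⟩ := exists_ne_zero_of_sum_ne_zero hnorm
  obtain ⟨hdi, hxi⟩ := mul_ne_zero_iff.mp hi
  have hdeg : 0 < G.degree i := Nat.pos_of_ne_zero (by simpa [dd] using hdi)
  rcases (abs_ne_zero.mp hxi).lt_or_gt with hneg | hpos
  · exact ⟨-x, h.neg, i, neg_pos.mpr hneg, hdeg⟩
  · exact ⟨x, h, i, hpos, hdeg⟩

theorem IsEigenpair.exists_flow (h : IsEigenpair G μ x) :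
    ∃ (F : Fin n → Fin n → ℝ) (s : Fin n → ℝ), (∀ i j, F j i = -F i j) ∧
      (∀ i j, x j < x i → F i j = if G.Adj i j then 1 else 0) ∧
      ∀ i, s i ∈ sgnSet (x i) ∧ ∑ j, F i j = μ * G.degree i * s i := by
  obtain ⟨-, z, hz, hanti, hsum⟩ := h
  choose s hs hs_sum using hsum
  refine ⟨fun i j => if G.Adj i j then z i j else 0, s, fun i j => ?_, fun i j hij => ?_,
    fun i => ⟨hs i, ?_⟩⟩
  · by_cases hadj : G.Adj i j
    · simp [hadj, hadj.symm, hanti i j hadj]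
    · simp [hadj, G.adj_comm j i]
  · dsimp only
    split_ifs with hadj
    · exact eq_one_of_mem_sgnSet (sub_pos.mpr hij) (hz i j hadj)
    · rfl
  · rw [← sum_filter, ← SimpleGraph.neighborFinset_eq_filter]
    exact hs_sum i

theorem IsEigenpair.mul_vol_eq_cutSize (h : IsEigenpair G μ x) :
    μ * G.vol {i | 0 < x i} = G.cutSize {i | 0 < x i} := by
  obtain ⟨F, s, hanti, hF, hFs⟩ := h.exists_flow
  set P : Finset (Fin n) := {i | 0 < x i}
  calc μ * G.vol P = ∑ i ∈ P, ∑ j, F i j := by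
        rw [SimpleGraph.vol, Nat.cast_sum, mul_sum]
        refine sum_congr rfl fun i hi => ?_
        rw [(hFs i).2, eq_one_of_mem_sgnSet (mem_filter.mp hi).2 (hFs i).1, mul_one]
    _ = ∑ i ∈ P, ∑ j ∈ Pᶜ, F i j := sum_sum_eq_sum_sum_compl_of_antisymm hanti P
    _ = G.cutSize P := by
        rw [SimpleGraph.cutSize, Nat.cast_sum]
        refine sum_congr rfl fun i hi => ?_
        rw [← sum_boole]
        refine sum_congr rfl fun j hj => hF i j ?_
        simp only [P, mem_compl, mem_filter, mem_univ, true_and, not_lt] at hi hj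
        linarith

theorem IsEigenpair.two_mul_vol_le (h : IsEigenpair G μ x) (hμ : μ ≠ 0) :
    2 * G.vol {i | 0 < x i} ≤ G.vol univ := by
  obtain ⟨F, s, hanti, -, hFs⟩ := h.exists_flow
  set P : Finset (Fin n) := {i | 0 < x i}
  have hbalance : ∑ i, (G.degree i : ℝ) * s i = 0 := by
    have htotal := sum_sum_eq_sum_sum_compl_of_antisymm hanti univ
    simp only [compl_univ, sum_empty, sum_const_zero, (hFs _).2, mul_assoc, ← mul_sum] at htotal
    exact (mul_eq_zero.mp htotal).resolve_left hμ
  have hP : ∑ i ∈ P, (G.degree i : ℝ) * s i = G.vol P := by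
    push_cast [SimpleGraph.vol]
    refine sum_congr rfl fun i hi => ?_
    rw [eq_one_of_mem_sgnSet (mem_filter.mp hi).2 (hFs i).1, mul_one]
  have hPc : -∑ i ∈ Pᶜ, (G.degree i : ℝ) * s i ≤ G.vol Pᶜ := by
    push_cast [SimpleGraph.vol]
    rw [← sum_neg_distrib]
    refine sum_le_sum fun i _ => ?_
    have hs := (abs_le.mp (abs_le_one_of_mem_sgnSet (hFs i).1)).1
    nlinarith [(G.degree i).cast_nonneg (α := ℝ)]
  have hvol : (G.vol P : ℝ) + G.vol Pᶜ = G.vol univ := by exact_mod_cast G.vol_add_vol_compl P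
  rw [← sum_add_sum_compl P] at hbalance
  exact_mod_cast (by linarith : (2 * G.vol P : ℝ) ≤ G.vol univ)

theorem IsEigenpair.exists_mul_natCast_eq (h : IsEigenpair G μ x) :
    ∃ a b : ℕ, a ≤ b ∧ 0 < b ∧ 2 * (b : ℝ) ≤ n * (n - 1) ∧ μ * b = a := by
  obtain ⟨y, hy, i, hyi, hdeg⟩ := h.exists_eigenpair_pos_at_pos_degree
  have hvol := G.vol_univ_le
  rw [Fintype.card_fin] at hvol
  by_cases hμ : μ = 0
  · have hn : (2 : ℝ) ≤ n := by
      have : G.degree i < n := by simpa using G.degree_lt_card_verts i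
      exact_mod_cast (by omega : 2 ≤ n)
    exact ⟨0, 1, zero_le_one, one_pos, by push_cast; nlinarith, by simp [hμ]⟩
  · refine ⟨G.cutSize {i | 0 < y i}, G.vol {i | 0 < y i}, G.cutSize_le_vol _, ?_, ?_,
      hy.mul_vol_eq_cutSize⟩
    · exact hdeg.trans_le (G.degree_le_vol (mem_filter.mpr ⟨mem_univ i, hyi⟩))
    · exact le_trans (by exact_mod_cast hy.two_mul_vol_le hμ) hvol

end Eigenpair

theorem div_sq_le_abs_sub_of_mul_natCast_eq {μ ν N : ℝ} {a b c e : ℕ} (hb : 0 < b) (he : 0 < e)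
    (hbN : 2 * (b : ℝ) ≤ N) (heN : 2 * (e : ℝ) ≤ N) (hμ : μ * b = a) (hν : ν * e = c)
    (hne : μ ≠ ν) : 4 / N ^ 2 ≤ |μ - ν| := by
  have hbe : (0 : ℝ) < b * e := by positivity
  have hdiff : (μ - ν) * (b * e) = a * e - c * b := by rw [← hμ, ← hν]; ring
  have hz : (a : ℤ) * e - c * b ≠ 0 := by
    intro h0
    have h0' : (a : ℝ) * e - c * b = 0 := by exact_mod_cast h0
    exact hne (sub_eq_zero.mp ((mul_eq_zero.mp (hdiff.trans h0')).resolve_right hbe.ne'))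
  have hone : (1 : ℝ) ≤ |μ - ν| * (b * e) := by
    rw [← abs_of_pos hbe, ← abs_mul, hdiff]
    exact_mod_cast Int.one_le_abs hz
  have hb1 : (1 : ℝ) ≤ b := by exact_mod_cast hb
  have he1 : (1 : ℝ) ≤ e := by exact_mod_cast he
  rw [div_le_iff₀ (by nlinarith)]
  nlinarith [abs_nonneg (μ - ν), mul_le_mul hbN heN (by positivity) (by linarith)]

theorem stmt8_general {n : ℕ} (G : SimpleGraph (Fin n)) [DecidableRel G.Adj] :
    (∀ μ ν : ℝ, (∃ x : Fin n → ℝ, IsEigenpair G μ x) →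
      (∃ x : Fin n → ℝ, IsEigenpair G ν x) → μ ≠ ν →
      4 / ((n : ℝ)^2 * ((n : ℝ) - 1)^2) ≤ |μ - ν|) ∧
    {μ : ℝ | ∃ x : Fin n → ℝ, IsEigenpair G μ x}.Finite := by
  refine ⟨fun μ ν ⟨x, hx⟩ ⟨y, hy⟩ hne => ?_, ?_⟩
  · obtain ⟨a, b, -, hb, hbN, hab⟩ := hx.exists_mul_natCast_eq
    obtain ⟨c, e, -, he, heN, hce⟩ := hy.exists_mul_natCast_eq
    rw [← mul_pow]
    exact div_sq_le_abs_sub_of_mul_natCast_eq hb he hbN heN hab hce hne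
  · refine ((range (n ^ 2 + 1) ×ˢ range (n ^ 2 + 1)).image
      fun p : ℕ × ℕ => (p.1 / p.2 : ℝ)).finite_toSet.subset ?_
    rintro μ ⟨x, hx⟩
    obtain ⟨a, b, hab, hb, hbN, hμ⟩ := hx.exists_mul_natCast_eq
    have hbn : b ≤ n ^ 2 := by
      have : (b : ℝ) ≤ n ^ 2 := by nlinarith
      exact_mod_cast this
    refine mem_coe.mpr (mem_image.mpr ⟨(a, b), ?_, ?_⟩)
    · simp only [mem_product, mem_range]
      omega
    · rw [div_eq_iff (by positivity), hμ]

/-- Two distinct eigenvalues of `Δ₁` on a graph with `n ≥ 2` vertices differ by at least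
`4 / (n²(n−1)²)`; consequently `Δ₁` has only finitely many eigenvalues. -/
theorem stmt8 {n : ℕ} (G : SimpleGraph (Fin n)) [DecidableRel G.Adj]
    (hd : ∀ i, 0 < dd G i) (hn : 2 ≤ n) :
    (∀ μ ν : ℝ, (∃ x : Fin n → ℝ, IsEigenpair G μ x) →
      (∃ x : Fin n → ℝ, IsEigenpair G ν x) → μ ≠ ν →
      4 / ((n : ℝ)^2 * ((n : ℝ) - 1)^2) ≤ |μ - ν|) ∧
    {μ : ℝ | ∃ x : Fin n → ℝ, IsEigenpair G μ x}.Finite :=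
  stmt8_general G
end

section
/- Let G be connected with n vertices. If x ∈ X has all coordinates equal, then x = ±(1/δ)(1,1,…,1) and x is an eigenvector of the graph 1-Laplacian Δ₁ with eigenvalue μ = 0. Conversely, every eigenvector x ∈ X of Δ₁ corresponding to the eigenvalue μ = 0 must equal ±(1/δ)(1,1,…,1). -/
open Finset

/-!
At a vertex `i` where `x` is maximal, every edge `ij` leaving the level set
`S = {k | x k = x i}` carries `z_{ij} = 1`. For `μ = 0` each vertex sum `Σ_{j∼i} z_{ij}`
vanishes; summing over `S`, the edges inside `S` cancel by antisymmetry, so the number of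
edges leaving `S` is zero. Hence the set of maximisers is closed under adjacency, and on a
connected graph `x` is constant; the normalisation `‖x‖_{1,d} = 1` then forces `x = ±1/δ`.
-/

lemma sgnSet_of_pos {t : ℝ} (ht : 0 < t) : sgnSet t = {1} := by
  simp [sgnSet, ht]

lemma zero_mem_sgnSet_zero : (0 : ℝ) ∈ sgnSet 0 := by
  simp [sgnSet]

lemma sgnSet_nonempty (t : ℝ) : (sgnSet t).Nonempty := by
  unfold sgnSet
  split_ifs
  · exact Set.singleton_nonempty 1
  · exact Set.singleton_nonempty (-1)
  · exact Set.nonempty_Icc.mpr (by norm_num)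

lemma sum_sum_eq_zero_of_antisymm {ι : Type*} (s : Finset ι) {f : ι → ι → ℝ}
    (hf : ∀ i j, f j i = -f i j) : ∑ i ∈ s, ∑ j ∈ s, f i j = 0 := by
  have hswap : ∑ i ∈ s, ∑ j ∈ s, f i j = -∑ i ∈ s, ∑ j ∈ s, f i j :=
    calc ∑ i ∈ s, ∑ j ∈ s, f i j = ∑ i ∈ s, ∑ j ∈ s, f j i := Finset.sum_comm
      _ = -∑ i ∈ s, ∑ j ∈ s, f i j := by
        simp only [← Finset.sum_neg_distrib]
        exact Finset.sum_congr rfl fun i _ => Finset.sum_congr rfl fun j _ => hf i j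
  linarith

lemma sum_sum_compl_eq_zero_of_antisymm {ι : Type*} [Fintype ι] [DecidableEq ι]
    (s : Finset ι) {f : ι → ι → ℝ} (hf : ∀ i j, f j i = -f i j)
    (hbal : ∀ i, ∑ j, f i j = 0) : ∑ i ∈ s, ∑ j ∈ sᶜ, f i j = 0 := by
  have hsplit : ∑ i ∈ s, ∑ j, f i j = ∑ i ∈ s, ∑ j ∈ s, f i j + ∑ i ∈ s, ∑ j ∈ sᶜ, f i j := by
    rw [← Finset.sum_add_distrib]
    exact Finset.sum_congr rfl fun i _ => (Finset.sum_add_sum_compl s (f i)).symm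
  rw [Finset.sum_eq_zero fun i _ => hbal i, sum_sum_eq_zero_of_antisymm s hf] at hsplit
  linarith

lemma SimpleGraph.Preconnected.forall_of_adj_imp {V : Type*} {G : SimpleGraph V}
    (hG : G.Preconnected) {p : V → Prop} (hp : ∀ u v, G.Adj u v → p u → p v)
    {u : V} (hu : p u) (v : V) : p v := by
  obtain ⟨w⟩ := hG u v
  induction w with
  | nil => exact hu
  | cons hadj _ ih => exact ih (hp _ _ hadj hu)

section Maximum

variable {V : Type*} [Fintype V] (G : SimpleGraph V) [DecidableRel G.Adj]
  {x : V → ℝ} {z : V → V → ℝ}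

lemma eq_of_adj_of_forall_le_of_sum_neighbor_eq_zero
    (hz : ∀ i j, G.Adj i j → z i j ∈ sgnSet (x i - x j))
    (hanti : ∀ i j, G.Adj i j → z j i = -z i j)
    (hbal : ∀ i, ∑ j ∈ G.neighborFinset i, z i j = 0)
    {i j : V} (hmax : ∀ k, x k ≤ x i) (hij : G.Adj i j) : x j = x i := by
  classical
  set f : V → V → ℝ := fun a b => if G.Adj a b then z a b else 0 with hf
  have hf_anti : ∀ a b, f b a = -f a b := by
    intro a b
    by_cases hab : G.Adj a b
    · simp [hf, hab, hab.symm, hanti a b hab]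
    · have hba : ¬G.Adj b a := fun h => hab h.symm
      simp [hf, hab, hba]
  have hf_bal : ∀ a, ∑ b, f a b = 0 := by
    intro a
    rw [← hbal a, SimpleGraph.neighborFinset_eq_filter, Finset.sum_filter]
  set S : Finset V := {k | x k = x i} with hS
  have hf_out : ∀ a ∈ S, ∀ b ∈ Sᶜ, f a b = if G.Adj a b then 1 else 0 := by
    intro a ha b hb
    simp only [hS, Finset.mem_compl, Finset.mem_filter, Finset.mem_univ, true_and] at ha hb
    by_cases hab : G.Adj a b
    · have hpos : 0 < x a - x b := by linarith [lt_of_le_of_ne (hmax b) hb]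
      have := hz a b hab
      rw [sgnSet_of_pos hpos, Set.mem_singleton_iff] at this
      simp [hf, hab, this]
    · simp [hf, hab]
  have hf_out_nonneg : ∀ a ∈ S, ∀ b ∈ Sᶜ, 0 ≤ f a b := by
    intro a ha b hb
    rw [hf_out a ha b hb]
    positivity
  have hcut := sum_sum_compl_eq_zero_of_antisymm S hf_anti hf_bal
  by_contra hji
  have hi : i ∈ S := by simp [hS]
  have hj : j ∈ Sᶜ := by simp [hS, hji]
  have hrow := (Finset.sum_eq_zero_iff_of_nonneg fun a ha =>
    Finset.sum_nonneg (hf_out_nonneg a ha)).mp hcut i hi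
  have hentry := (Finset.sum_eq_zero_iff_of_nonneg (hf_out_nonneg i hi)).mp hrow j hj
  simp [hf_out i hi j hj, hij] at hentry

end Maximum

section Eigenpair

variable {n : ℕ} (G : SimpleGraph (Fin n)) [DecidableRel G.Adj] {x : Fin n → ℝ}

lemma norm1d_const (c : ℝ) : norm1d G (fun _ => c) = deltaTot G * |c| := by
  simp only [norm1d, deltaTot, Finset.sum_mul]

lemma deltaTot_nonneg : 0 ≤ deltaTot G := by
  unfold deltaTot dd
  positivity

lemma eq_or_eq_neg_inv_deltaTot_of_norm1d_const {c : ℝ} (h : norm1d G (fun _ => c) = 1) :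
    c = 1 / deltaTot G ∨ c = -(1 / deltaTot G) := by
  rw [norm1d_const] at h
  have hδ : deltaTot G ≠ 0 := by
    rintro hδ
    simp [hδ] at h
  have habs : |c| = 1 / deltaTot G := by
    field_simp
    linarith
  exact (abs_eq (by simpa using deltaTot_nonneg G)).mp habs

lemma eq_or_eq_neg_inv_deltaTot_of_forall_eq (hx : norm1d G x = 1) (hc : ∀ i j, x i = x j) :
    (x = fun _ => 1 / deltaTot G) ∨ (x = fun _ => -(1 / deltaTot G)) := by
  obtain hV | ⟨⟨i₀⟩⟩ := isEmpty_or_nonempty (Fin n)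
  · exact Or.inl (funext fun i => isEmptyElim i)
  have hx_const : x = fun _ => x i₀ := funext fun i => hc i i₀
  rw [hx_const] at hx ⊢
  rcases eq_or_eq_neg_inv_deltaTot_of_norm1d_const G hx with h | h
  · exact Or.inl (by rw [h])
  · exact Or.inr (by rw [h])

lemma isEigenpair_zero_of_forall_eq (hx : norm1d G x = 1) (hc : ∀ i j, x i = x j) :
    IsEigenpair G 0 x := by
  refine ⟨hx, fun _ _ => 0, fun i j _ => ?_, fun _ _ _ => neg_zero.symm, fun i => ?_⟩
  · rw [hc i j, sub_self]
    exact zero_mem_sgnSet_zero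
  · obtain ⟨s, hs⟩ := sgnSet_nonempty (x i)
    exact ⟨s, hs, by simp⟩

lemma IsEigenpair.forall_eq_of_zero (hG : G.Preconnected) (hx : IsEigenpair G 0 x) :
    ∀ i j, x i = x j := by
  obtain ⟨-, z, hz, hanti, hsum⟩ := hx
  have hbal : ∀ i, ∑ j ∈ G.neighborFinset i, z i j = 0 := fun i => by
    obtain ⟨s, -, hs⟩ := hsum i
    simpa using hs
  intro i j
  have : Nonempty (Fin n) := ⟨i⟩
  obtain ⟨i₀, hi₀⟩ := Finite.exists_max x
  have hmax_closed : ∀ u v, G.Adj u v → x u = x i₀ → x v = x i₀ := by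
    intro u v huv hu
    rw [← hu]
    exact eq_of_adj_of_forall_le_of_sum_neighbor_eq_zero G hz hanti hbal
      (fun k => hu ▸ hi₀ k) huv
  rw [hG.forall_of_adj_imp hmax_closed rfl i, hG.forall_of_adj_imp hmax_closed rfl j]

end Eigenpair

/-- For connected `G`: any `x ∈ X` with all coordinates equal is `±(1/δ)(1,…,1)` and is an
eigenvector of `Δ₁` with eigenvalue `0`; conversely, every eigenvector of `Δ₁` with
eigenvalue `0` equals `±(1/δ)(1,…,1)`. -/
theorem stmt10 {n : ℕ} (G : SimpleGraph (Fin n)) [DecidableRel G.Adj]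
    (hG : G.Connected) :
    (∀ x : Fin n → ℝ, x ∈ Xset G → (∀ i j, x i = x j) →
      ((x = fun _ => 1 / deltaTot G) ∨ (x = fun _ => -(1 / deltaTot G))) ∧
        IsEigenpair G 0 x) ∧
    (∀ x : Fin n → ℝ, IsEigenpair G 0 x →
      (x = fun _ => 1 / deltaTot G) ∨ (x = fun _ => -(1 / deltaTot G))) :=
  ⟨fun _ hx hc => ⟨eq_or_eq_neg_inv_deltaTot_of_forall_eq G hx hc,
      isEigenpair_zero_of_forall_eq G hx hc⟩,
    fun _ hx => eq_or_eq_neg_inv_deltaTot_of_forall_eq G hx.1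
      (hx.forall_eq_of_zero G hG.preconnected)⟩
end

section
/- Any eigenvector x ∈ X of the graph 1-Laplacian Δ₁ corresponding to an eigenvalue μ ≠ 0 lies on π, i.e., satisfies |δ₊(x) − δ₋(x)| ≤ δ₀(x). -/
open Finset

/-!
Summing the eigen-equation `Σ_{j∼i} z_{ij} = μ d_i s_i` over all vertices, the antisymmetry of
`z` makes the left side vanish, so `μ Σ_i d_i s_i = 0` and hence `Σ_i d_i s_i = 0`. As `s_i = ±1`
according to the sign of `x_i` and `|s_i| ≤ 1` where `x_i = 0`, this sum differs from
`δ₊(x) − δ₋(x)` by at most `δ₀(x)`.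
-/

theorem sum_neighborFinset_eq_zero_of_antisymm {V : Type*} [Fintype V] (G : SimpleGraph V)
    [DecidableRel G.Adj] (z : V → V → ℝ) (hz : ∀ i j, G.Adj i j → z j i = -z i j) :
    ∑ i, ∑ j ∈ G.neighborFinset i, z i j = 0 := by
  set S := ∑ i, ∑ j ∈ G.neighborFinset i, z i j
  have hS : S = ∑ i, ∑ j, if G.Adj i j then z i j else 0 := by
    simp only [S, SimpleGraph.neighborFinset_eq_filter, sum_filter]
  have hswap : S = -S := by
    conv_rhs => rw [hS, sum_comm, ← sum_neg_distrib]
    rw [hS]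
    refine sum_congr rfl fun i _ => ?_
    rw [← sum_neg_distrib]
    refine sum_congr rfl fun j _ => ?_
    by_cases h : G.Adj i j
    · simp [h, h.symm, hz i j h]
    · have h' : ¬G.Adj j i := fun h' => h h'.symm
      simp [h, h']
  linarith

theorem abs_mul_sub_le_of_mem_sgnSet {t s w : ℝ} (hw : 0 ≤ w) (hs : s ∈ sgnSet t) :
    |w * s - ((if 0 < t then w else 0) - if t < 0 then w else 0)| ≤ if t = 0 then w else 0 := by
  rcases lt_trichotomy t 0 with ht | rfl | ht
  · have : s = -1 := by simpa [sgnSet, ht, ht.not_gt] using hs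
    simp [ht, ht.not_gt, ht.ne, this]
  · have : |s| ≤ 1 := abs_le.mpr (by simpa [sgnSet] using hs)
    simpa [abs_mul, abs_of_nonneg hw] using mul_le_of_le_one_right hw this
  · have : s = 1 := by simpa [sgnSet, ht] using hs
    simp [ht, ht.not_gt, ht.ne', this]

theorem abs_sum_mul_sub_le_of_mem_sgnSet {ι : Type*} [Fintype ι] {w s x : ι → ℝ}
    (hw : ∀ i, 0 ≤ w i) (hs : ∀ i, s i ∈ sgnSet (x i)) :
    |∑ i, w i * s i - ((∑ i, if 0 < x i then w i else 0) - ∑ i, if x i < 0 then w i else 0)|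
      ≤ ∑ i, if x i = 0 then w i else 0 := by
  rw [← sum_sub_distrib, ← sum_sub_distrib]
  exact (abs_sum_le_sum_abs _ _).trans
    (sum_le_sum fun i _ => abs_mul_sub_le_of_mem_sgnSet (hw i) (hs i))

theorem stmt11_general {n : ℕ} (G : SimpleGraph (Fin n)) [DecidableRel G.Adj]
    (μ : ℝ) (x : Fin n → ℝ)
    (hpair : IsEigenpair G μ x) (hμ : μ ≠ 0) :
    |deltaP G x - deltaM G x| ≤ delta0 G x := by
  obtain ⟨-, z, -, hanti, hsgn⟩ := hpair
  choose s hs hsum using hsgn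
  have hbalance : ∑ i, dd G i * s i = 0 := by
    have : μ * ∑ i, dd G i * s i = 0 := by
      rw [mul_sum, ← sum_neighborFinset_eq_zero_of_antisymm G z hanti]
      exact sum_congr rfl fun i _ => by rw [hsum]; ring
    exact (mul_eq_zero.mp this).resolve_left hμ
  have hbound := abs_sum_mul_sub_le_of_mem_sgnSet (w := dd G)
    (fun i => Nat.cast_nonneg (G.degree i)) hs
  rwa [hbalance, zero_sub, abs_neg] at hbound

/-- Any eigenvector `x ∈ X` of `Δ₁` with eigenvalue `μ ≠ 0` lies on `π`, i.e. satisfies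
`|δ₊(x) − δ₋(x)| ≤ δ₀(x)`. -/
theorem stmt11 {n : ℕ} (G : SimpleGraph (Fin n)) [DecidableRel G.Adj]
    (hd : ∀ i, 0 < dd G i) (μ : ℝ) (x : Fin n → ℝ)
    (hpair : IsEigenpair G μ x) (hμ : μ ≠ 0) :
    |deltaP G x - deltaM G x| ≤ delta0 G x :=
  stmt11_general G μ x hpair hμ
end

section
/- Let G be connected and let (A, Aᶜ) be a Cheeger cut of G. If A is a disjoint union of two nonempty sets A₁ and A₂ with no edges between A₁ and A₂ (E(A₁,A₂) = ∅), then vol(A) ≤ vol(Aᶜ), and both (A₁, A₁ᶜ) and (A₂, A₂ᶜ) are Cheeger cuts with |∂A₁|/vol(A₁) = |∂A₂|/vol(A₂) = h(G). -/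
open Finset

/-- `vol(A) = Σ_{i∈A} d_i`. -/
noncomputable def volA {n : ℕ} (G : SimpleGraph (Fin n)) [DecidableRel G.Adj]
    (A : Finset (Fin n)) : ℝ :=
  ∑ i ∈ A, dd G i

/-- `|∂A|`: the number of edges with one endpoint in `A` and the other in `Aᶜ`
(counted as ordered pairs `(i, j)` with `i ∈ A`, `j ∉ A`, `i ∼ j`). -/
def bdryCard {n : ℕ} (G : SimpleGraph (Fin n)) [DecidableRel G.Adj]
    (A : Finset (Fin n)) : ℕ :=
  (Finset.univ.filter (fun p : Fin n × Fin n => p.1 ∈ A ∧ p.2 ∉ A ∧ G.Adj p.1 p.2)).card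

/-- The cut ratio `|∂S| / min(vol(S), vol(Sᶜ))`. -/
noncomputable def cutRatio {n : ℕ} (G : SimpleGraph (Fin n)) [DecidableRel G.Adj]
    (S : Finset (Fin n)) : ℝ :=
  (bdryCard G S : ℝ) / min (volA G S) (volA G Sᶜ)

/-- The Cheeger constant `h(G)`: the minimum of the cut ratio over nonempty proper subsets. -/
noncomputable def cheegerConst {n : ℕ} (G : SimpleGraph (Fin n)) [DecidableRel G.Adj] : ℝ :=
  sInf {r : ℝ | ∃ S : Finset (Fin n), S.Nonempty ∧ S ≠ Finset.univ ∧ r = cutRatio G S}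

/-- `(A, Aᶜ)` is a Cheeger cut: `A` is nonempty and proper and its cut ratio equals `h(G)`. -/
def IsCheegerCut {n : ℕ} (G : SimpleGraph (Fin n)) [DecidableRel G.Adj]
    (A : Finset (Fin n)) : Prop :=
  A.Nonempty ∧ A ≠ Finset.univ ∧ cutRatio G A = cheegerConst G

/-- The subgraph of `G` induced on `A` is connected. -/
def IndConnected {n : ℕ} (G : SimpleGraph (Fin n)) (A : Finset (Fin n)) : Prop :=
  (G.induce (A : Set (Fin n))).Connected

/-!
With no edges between `A₁` and `A₂`, both `|∂·|` and `vol` are additive over `A = A₁ ∪ A₂`.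
Each `Aᵢ` competes in the Cheeger minimum and `Aᶜ ⊆ Aᵢᶜ`, so `|∂Aᵢ| ≥ h · min(vol Aᵢ, vol Aᶜ)`.
If `vol Aᶜ < vol A₁ + vol A₂`, then `min(vol A₁, vol Aᶜ) + min(vol A₂, vol Aᶜ) > vol Aᶜ`, and
summing gives `|∂A| > h · vol Aᶜ = |∂A|` (as `h > 0`). Hence `vol A ≤ vol Aᶜ`; then the two
inequalities `|∂Aᵢ| ≥ h · vol Aᵢ` add up to the equality `|∂A| = h · vol A`, so both are equalities.
-/

theorem lt_min_add_min {α : Type*} [AddCommGroup α] [LinearOrder α] [IsOrderedAddMonoid α]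
    {a b c : α} (ha : 0 < a) (hb : 0 < b) (hc₀ : 0 < c) (hc : c < a + b) :
    c < min a c + min b c := by
  rcases min_cases a c with ⟨hac, -⟩ | ⟨hac, -⟩ <;>
  rcases min_cases b c with ⟨hbc, -⟩ | ⟨hbc, -⟩ <;> rw [hac, hbc]
  · exact hc
  · exact lt_add_of_pos_left c ha
  · exact lt_add_of_pos_right c hb
  · exact lt_add_of_pos_left c hc₀

lemma ne_univ_of_subset_of_ne_univ {α : Type*} [Fintype α] {s t : Finset α} (hst : s ⊆ t)
    (ht : t ≠ univ) : s ≠ univ :=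
  fun hs => ht (univ_subset_iff.mp (hs ▸ hst))

section Cheeger

variable {n : ℕ} {G : SimpleGraph (Fin n)}

lemma exists_adj_mem_not_mem (hG : G.Connected) {S : Finset (Fin n)} (hS : S.Nonempty)
    (hS' : S ≠ univ) : ∃ a ∈ S, ∃ b ∉ S, G.Adj a b := by
  obtain ⟨u, hu⟩ := hS
  obtain ⟨v, hv⟩ : ∃ v, v ∉ S := by simpa [eq_univ_iff_forall] using hS'
  obtain ⟨d, -, hd, hd'⟩ :=
    (hG.preconnected u v).some.exists_boundary_dart (S : Set (Fin n)) hu hv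
  exact ⟨d.fst, hd, d.snd, hd', d.adj⟩

variable [DecidableRel G.Adj]

lemma volA_mono {S T : Finset (Fin n)} (h : S ⊆ T) : volA G S ≤ volA G T :=
  sum_le_sum_of_subset_of_nonneg h fun i _ _ => Nat.cast_nonneg (G.degree i)

lemma volA_union {S T : Finset (Fin n)} (h : Disjoint S T) :
    volA G (S ∪ T) = volA G S + volA G T :=
  sum_union h

lemma bdryCard_union {S T : Finset (Fin n)} (hST : Disjoint S T)
    (hnoedge : ∀ i ∈ S, ∀ j ∈ T, ¬ G.Adj i j) :
    bdryCard G (S ∪ T) = bdryCard G S + bdryCard G T := by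
  rw [bdryCard, bdryCard, bdryCard, ← card_union_of_disjoint]
  · congr 1
    ext ⟨i, j⟩
    simp only [mem_filter, mem_union, mem_univ, true_and, not_or]
    constructor
    · rintro ⟨hi | hi, ⟨hjS, hjT⟩, hij⟩
      exacts [Or.inl ⟨hi, hjS, hij⟩, Or.inr ⟨hi, hjT, hij⟩]
    · rintro (⟨hi, hjS, hij⟩ | ⟨hi, hjT, hij⟩)
      · exact ⟨Or.inl hi, ⟨hjS, fun hj => hnoedge i hi j hj hij⟩, hij⟩
      · exact ⟨Or.inr hi, ⟨fun hj => hnoedge j hj i hi hij.symm, hjT⟩, hij⟩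
  · exact disjoint_filter_filter' _ _ fun P hPS hPT p hp =>
      disjoint_left.mp hST (hPS p hp).1 (hPT p hp).1

lemma dd_pos_of_adj {a b : Fin n} (h : G.Adj a b) : 0 < dd G a := by
  unfold dd
  exact_mod_cast (G.degree_pos_iff_exists_adj a).mpr ⟨b, h⟩

lemma volA_pos_of_mem {S : Finset (Fin n)} {a b : Fin n} (ha : a ∈ S) (h : G.Adj a b) :
    0 < volA G S :=
  sum_pos' (fun i _ => Nat.cast_nonneg (G.degree i)) ⟨a, ha, dd_pos_of_adj h⟩

lemma volA_pos (hG : G.Connected) {S : Finset (Fin n)} (hS : S.Nonempty) (hS' : S ≠ univ) :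
    0 < volA G S := by
  obtain ⟨a, ha, b, -, hab⟩ := exists_adj_mem_not_mem hG hS hS'
  exact volA_pos_of_mem ha hab

lemma volA_compl_pos (hG : G.Connected) {S : Finset (Fin n)} (hS : S.Nonempty)
    (hS' : S ≠ univ) : 0 < volA G Sᶜ := by
  obtain ⟨a, -, b, hb, hab⟩ := exists_adj_mem_not_mem hG hS hS'
  exact volA_pos_of_mem (mem_compl.mpr hb) hab.symm

lemma min_volA_pos (hG : G.Connected) {S : Finset (Fin n)} (hS : S.Nonempty)
    (hS' : S ≠ univ) : 0 < min (volA G S) (volA G Sᶜ) :=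
  lt_min (volA_pos hG hS hS') (volA_compl_pos hG hS hS')

lemma cutRatio_pos (hG : G.Connected) {S : Finset (Fin n)} (hS : S.Nonempty)
    (hS' : S ≠ univ) : 0 < cutRatio G S := by
  obtain ⟨a, ha, b, hb, hab⟩ := exists_adj_mem_not_mem hG hS hS'
  have hbdry : 0 < bdryCard G S := card_pos.mpr ⟨(a, b), by simp [ha, hb, hab]⟩
  exact div_pos (Nat.cast_pos.mpr hbdry) (min_volA_pos hG hS hS')

lemma finite_cutRatios :
    {r : ℝ | ∃ S : Finset (Fin n), S.Nonempty ∧ S ≠ univ ∧ r = cutRatio G S}.Finite :=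
  (Set.finite_range (cutRatio G)).subset fun _ ⟨S, _, _, hr⟩ => ⟨S, hr.symm⟩

lemma cheegerConst_le_cutRatio {S : Finset (Fin n)} (hS : S.Nonempty) (hS' : S ≠ univ) :
    cheegerConst G ≤ cutRatio G S :=
  csInf_le finite_cutRatios.bddBelow ⟨S, hS, hS', rfl⟩

lemma cheegerConst_pos (hG : G.Connected) {S : Finset (Fin n)} (hS : S.Nonempty)
    (hS' : S ≠ univ) : 0 < cheegerConst G := by
  have hmem : cheegerConst G ∈
      {r : ℝ | ∃ S : Finset (Fin n), S.Nonempty ∧ S ≠ univ ∧ r = cutRatio G S} :=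
    Set.Nonempty.csInf_mem ⟨cutRatio G S, S, hS, hS', rfl⟩ finite_cutRatios
  obtain ⟨T, hT, hT', hTeq⟩ := hmem
  exact hTeq ▸ cutRatio_pos hG hT hT'

lemma cheegerConst_mul_min_le_bdryCard (hG : G.Connected) {S : Finset (Fin n)}
    (hS : S.Nonempty) (hS' : S ≠ univ) :
    cheegerConst G * min (volA G S) (volA G Sᶜ) ≤ bdryCard G S :=
  (le_div_iff₀ (min_volA_pos hG hS hS')).mp (cheegerConst_le_cutRatio hS hS')

lemma IsCheegerCut.bdryCard_eq (hG : G.Connected) {A : Finset (Fin n)} (hA : IsCheegerCut G A) :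
    (bdryCard G A : ℝ) = cheegerConst G * min (volA G A) (volA G Aᶜ) :=
  (div_eq_iff (min_volA_pos hG hA.1 hA.2.1).ne').mp hA.2.2

lemma cheegerConst_mul_min_le_bdryCard_of_subset (hG : G.Connected) {A T : Finset (Fin n)}
    (hTA : T ⊆ A) (hT : T.Nonempty) (hA : A ≠ univ) :
    cheegerConst G * min (volA G T) (volA G Aᶜ) ≤ bdryCard G T := by
  have hT' := ne_univ_of_subset_of_ne_univ hTA hA
  calc cheegerConst G * min (volA G T) (volA G Aᶜ)
      ≤ cheegerConst G * min (volA G T) (volA G Tᶜ) := by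
        gcongr
        · exact (cheegerConst_pos hG hT hT').le
        · exact volA_mono (compl_subset_compl.mpr hTA)
    _ ≤ bdryCard G T := cheegerConst_mul_min_le_bdryCard hG hT hT'

end Cheeger

section CheegerCutSplit

variable {n : ℕ} {G : SimpleGraph (Fin n)} [DecidableRel G.Adj] {A₁ A₂ : Finset (Fin n)}

lemma IsCheegerCut.volA_le_volA_compl_of_union (hG : G.Connected)
    (hA : IsCheegerCut G (A₁ ∪ A₂)) (hdisj : Disjoint A₁ A₂) (h1 : A₁.Nonempty)
    (h2 : A₂.Nonempty) (hnoedge : ∀ i ∈ A₁, ∀ j ∈ A₂, ¬ G.Adj i j) :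
    volA G (A₁ ∪ A₂) ≤ volA G (A₁ ∪ A₂)ᶜ := by
  by_contra! hlt
  have hbA := hA.bdryCard_eq hG
  rw [bdryCard_union hdisj hnoedge, min_eq_right hlt.le] at hbA
  push_cast at hbA
  rw [volA_union hdisj] at hlt
  have hb1 := cheegerConst_mul_min_le_bdryCard_of_subset hG subset_union_left h1 hA.2.1
  have hb2 := cheegerConst_mul_min_le_bdryCard_of_subset hG subset_union_right h2 hA.2.1
  have hv1 := volA_pos hG h1 (ne_univ_of_subset_of_ne_univ subset_union_left hA.2.1)
  have hv2 := volA_pos hG h2 (ne_univ_of_subset_of_ne_univ subset_union_right hA.2.1)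
  have hsplit := mul_lt_mul_of_pos_left
    (lt_min_add_min hv1 hv2 (volA_compl_pos hG hA.1 hA.2.1) hlt) (cheegerConst_pos hG hA.1 hA.2.1)
  linarith

lemma IsCheegerCut.of_union_left (hG : G.Connected)
    (hA : IsCheegerCut G (A₁ ∪ A₂)) (hdisj : Disjoint A₁ A₂) (h1 : A₁.Nonempty)
    (h2 : A₂.Nonempty) (hnoedge : ∀ i ∈ A₁, ∀ j ∈ A₂, ¬ G.Adj i j) :
    IsCheegerCut G A₁ ∧ (bdryCard G A₁ : ℝ) / volA G A₁ = cheegerConst G := by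
  have hvol := hA.volA_le_volA_compl_of_union hG hdisj h1 h2 hnoedge
  have hv1le : volA G A₁ ≤ volA G (A₁ ∪ A₂) := volA_mono subset_union_left
  have hv2le : volA G A₂ ≤ volA G (A₁ ∪ A₂) := volA_mono subset_union_right
  have hbA := hA.bdryCard_eq hG
  rw [bdryCard_union hdisj hnoedge, min_eq_left hvol, volA_union hdisj] at hbA
  push_cast at hbA
  have hb1 := cheegerConst_mul_min_le_bdryCard_of_subset hG subset_union_left h1 hA.2.1
  have hb2 := cheegerConst_mul_min_le_bdryCard_of_subset hG subset_union_right h2 hA.2.1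
  rw [min_eq_left (hv1le.trans hvol)] at hb1
  rw [min_eq_left (hv2le.trans hvol)] at hb2
  have hA1 := ne_univ_of_subset_of_ne_univ subset_union_left hA.2.1
  have hratio : (bdryCard G A₁ : ℝ) / volA G A₁ = cheegerConst G :=
    (div_eq_iff (volA_pos hG h1 hA1).ne').mpr (by linarith)
  have hmin : min (volA G A₁) (volA G A₁ᶜ) = volA G A₁ :=
    min_eq_left ((hv1le.trans hvol).trans (volA_mono (compl_subset_compl.mpr subset_union_left)))
  exact ⟨⟨h1, hA1, by rw [cutRatio, hmin, hratio]⟩, hratio⟩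

end CheegerCutSplit

theorem stmt12_general {n : ℕ} (G : SimpleGraph (Fin n)) [DecidableRel G.Adj]
    (hG : G.Connected) (A A₁ A₂ : Finset (Fin n))
    (hA : IsCheegerCut G A) (hunion : A = A₁ ∪ A₂) (hdisj : Disjoint A₁ A₂)
    (h1 : A₁.Nonempty) (h2 : A₂.Nonempty)
    (hnoedge : ∀ i ∈ A₁, ∀ j ∈ A₂, ¬ G.Adj i j) :
    volA G A ≤ volA G Aᶜ ∧
    IsCheegerCut G A₁ ∧ IsCheegerCut G A₂ ∧
    (bdryCard G A₁ : ℝ) / volA G A₁ = cheegerConst G ∧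
    (bdryCard G A₂ : ℝ) / volA G A₂ = cheegerConst G := by
  subst hunion
  have hnoedge' : ∀ i ∈ A₂, ∀ j ∈ A₁, ¬ G.Adj i j :=
    fun i hi j hj hij => hnoedge j hj i hi hij.symm
  obtain ⟨hcut1, hratio1⟩ := hA.of_union_left hG hdisj h1 h2 hnoedge
  obtain ⟨hcut2, hratio2⟩ := (union_comm A₁ A₂ ▸ hA).of_union_left hG hdisj.symm h2 h1 hnoedge'
  exact ⟨hA.volA_le_volA_compl_of_union hG hdisj h1 h2 hnoedge, hcut1, hcut2, hratio1, hratio2⟩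

/-- If `(A, Aᶜ)` is a Cheeger cut of a connected graph and `A = A₁ ⊔ A₂` with `A₁, A₂`
nonempty and no edges between them, then `vol(A) ≤ vol(Aᶜ)`, and `(A₁, A₁ᶜ)`, `(A₂, A₂ᶜ)`
are also Cheeger cuts with `|∂A₁|/vol(A₁) = |∂A₂|/vol(A₂) = h(G)`. -/
theorem stmt12 {n : ℕ} (G : SimpleGraph (Fin n)) [DecidableRel G.Adj]
    (hn : 2 ≤ n) (hG : G.Connected) (A A₁ A₂ : Finset (Fin n))
    (hA : IsCheegerCut G A) (hunion : A = A₁ ∪ A₂) (hdisj : Disjoint A₁ A₂)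
    (h1 : A₁.Nonempty) (h2 : A₂.Nonempty)
    (hnoedge : ∀ i ∈ A₁, ∀ j ∈ A₂, ¬ G.Adj i j) :
    volA G A ≤ volA G Aᶜ ∧
    IsCheegerCut G A₁ ∧ IsCheegerCut G A₂ ∧
    (bdryCard G A₁ : ℝ) / volA G A₁ = cheegerConst G ∧
    (bdryCard G A₂ : ℝ) / volA G A₂ = cheegerConst G :=
  stmt12_general G hG A A₁ A₂ hA hunion hdisj h1 h2 hnoedge
end

section
/- Let x⁰ ∈ π and let v⁰ ∈ ℝⁿ satisfy v⁰_i = d_i when x⁰_i > 0, v⁰_i = −d_i when x⁰_i < 0, |v⁰_i| ≤ d_i when x⁰_i = 0, and Σ_i v⁰_i = 0. Set λ⁰ = I(x⁰). Let Gf : ℝⁿ → ℝ be a convex function attaining its global minimum at x⁰, and let x¹ be a global minimizer over ℝⁿ of x ↦ I(x) − λ⁰⟨v⁰, x⟩ + λ⁰ Gf(x). Then, provided x¹ ≠ 0, F(x¹) ≤ F(x⁰); moreover, for any α ∈ ℝ minimizing t ↦ Σ_i d_i|x¹_i − t| such that x¹ − α·(1,…,1) ≠ 0, one has F(x¹ −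 α·(1,…,1)) ≤ F(x⁰). -/
/-!
Since `x⁰` minimizes `Gf` and `λ⁰ = I(x⁰) = λ⁰⟨v⁰, x⁰⟩`, comparing the objective at `x¹` with its
value at `x⁰` gives `I(x¹) ≤ λ⁰⟨v⁰, x¹⟩`, and `⟨v⁰, x¹⟩ ≤ ‖x¹‖_{1,d}` because `|v⁰_i| ≤ d_i`.
Both `I` and `⟨v⁰, ·⟩` are invariant under subtracting a constant vector (the latter as
`Σ_i v⁰_i = 0`), so the same bound holds for `x¹ − α·1`, for every `α`.
-/

open Finset

/-- `I(x) = (1/2) Σ_{i,j} a_{ij} |x_i − x_j|`, with `a` the adjacency matrix. -/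
noncomputable def Ifun {n : ℕ} (G : SimpleGraph (Fin n)) [DecidableRel G.Adj]
    (x : Fin n → ℝ) : ℝ :=
  (1 / 2) * ∑ i, ∑ j, (if G.Adj i j then (1 : ℝ) else 0) * |x i - x j|

theorem le_mul_of_forall_le_sub_mul_add_mul {E : Type*} {I ℓ g : E → ℝ} {c : ℝ} {x₀ x₁ : E}
    (hc : 0 ≤ c) (hI : I x₀ = c * ℓ x₀) (hg : ∀ y, g x₀ ≤ g y)
    (hx₁ : ∀ y, I x₁ - c * ℓ x₁ + c * g x₁ ≤ I y - c * ℓ y + c * g y) :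
    I x₁ ≤ c * ℓ x₁ := by
  linarith [hx₁ x₀, mul_le_mul_of_nonneg_left (hg x₁) hc]

theorem sum_mul_sub_const {ι : Type*} [Fintype ι] {v : ι → ℝ} (hv : ∑ i, v i = 0)
    (x : ι → ℝ) (α : ℝ) : ∑ i, v i * (x i - α) = ∑ i, v i * x i := by
  simp only [mul_sub, sum_sub_distrib, ← sum_mul, hv, zero_mul, sub_zero]

section Graph

variable {n : ℕ} (G : SimpleGraph (Fin n)) [DecidableRel G.Adj]

theorem Ifun_nonneg (x : Fin n → ℝ) : 0 ≤ Ifun G x := by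
  unfold Ifun
  refine mul_nonneg (by norm_num) (sum_nonneg fun _ _ => sum_nonneg fun _ _ => ?_)
  exact mul_nonneg (by split_ifs <;> norm_num) (abs_nonneg _)

theorem Ifun_sub_const (x : Fin n → ℝ) (α : ℝ) : Ifun G (fun i => x i - α) = Ifun G x := by
  simp only [Ifun, sub_sub_sub_cancel_right]

variable {G}

theorem abs_le_dd_of_subgradient {x v : Fin n → ℝ}
    (hpos : ∀ i, 0 < x i → v i = dd G i) (hneg : ∀ i, x i < 0 → v i = -dd G i)
    (hzero : ∀ i, x i = 0 → |v i| ≤ dd G i) (i : Fin n) : |v i| ≤ dd G i := by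
  have hd : 0 ≤ dd G i := Nat.cast_nonneg _
  rcases lt_trichotomy (x i) 0 with h | h | h
  · rw [hneg i h, abs_neg, abs_of_nonneg hd]
  · exact hzero i h
  · rw [hpos i h, abs_of_nonneg hd]

theorem sum_mul_eq_norm1d_of_subgradient {x v : Fin n → ℝ}
    (hpos : ∀ i, 0 < x i → v i = dd G i) (hneg : ∀ i, x i < 0 → v i = -dd G i) :
    ∑ i, v i * x i = norm1d G x := by
  refine sum_congr rfl fun i _ => ?_
  rcases lt_trichotomy (x i) 0 with h | h | h
  · rw [hneg i h, abs_of_neg h, neg_mul_comm]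
  · simp [h]
  · rw [hpos i h, abs_of_pos h]

theorem sum_mul_le_norm1d {v : Fin n → ℝ} (hv : ∀ i, |v i| ≤ dd G i) (x : Fin n → ℝ) :
    ∑ i, v i * x i ≤ norm1d G x :=
  sum_le_sum fun i _ => (le_abs_self _).trans <|
    (abs_mul (v i) (x i)).trans_le (mul_le_mul_of_nonneg_right (hv i) (abs_nonneg _))

/-- When `norm1d G x = 0` the quotient takes the junk value `0`. -/
theorem Ifun_div_norm1d_le {v x : Fin n → ℝ} {c : ℝ} (hv : ∀ i, |v i| ≤ dd G i)
    (hc : 0 ≤ c) (h : Ifun G x ≤ c * ∑ i, v i * x i) : Ifun G x / norm1d G x ≤ c :=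
  div_le_of_le_mul₀ (sum_nonneg fun _ _ => mul_nonneg (Nat.cast_nonneg _) (abs_nonneg _)) hc
    (h.trans (mul_le_mul_of_nonneg_left (sum_mul_le_norm1d hv x) hc))

end Graph

theorem stmt19_general {n : ℕ} (G : SimpleGraph (Fin n)) [DecidableRel G.Adj]
    (x0 : Fin n → ℝ) (hx0 : x0 ∈ piSet G)
    (v0 : Fin n → ℝ)
    (hv1 : ∀ i, 0 < x0 i → v0 i = dd G i)
    (hv2 : ∀ i, x0 i < 0 → v0 i = -dd G i)
    (hv3 : ∀ i, x0 i = 0 → |v0 i| ≤ dd G i)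
    (hv4 : (∑ i, v0 i) = 0)
    (lam0 : ℝ) (hlam0 : lam0 = Ifun G x0)
    (Gf : (Fin n → ℝ) → ℝ)
    (hGfmin : ∀ y : Fin n → ℝ, Gf x0 ≤ Gf y)
    (x1 : Fin n → ℝ)
    (hx1 : ∀ y : Fin n → ℝ,
      Ifun G x1 - lam0 * (∑ i, v0 i * x1 i) + lam0 * Gf x1 ≤
      Ifun G y - lam0 * (∑ i, v0 i * y i) + lam0 * Gf y) :
    (x1 ≠ 0 → Ifun G x1 / norm1d G x1 ≤ Ifun G x0 / norm1d G x0) ∧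
    (∀ α : ℝ, (∀ t : ℝ, (∑ i, dd G i * |x1 i - α|) ≤ ∑ i, dd G i * |x1 i - t|) →
      (fun i => x1 i - α) ≠ 0 →
      Ifun G (fun i => x1 i - α) / norm1d G (fun i => x1 i - α) ≤
        Ifun G x0 / norm1d G x0) := by
  obtain ⟨hx0n, -⟩ := hx0
  have hv := abs_le_dd_of_subgradient hv1 hv2 hv3
  have hlam : 0 ≤ lam0 := hlam0 ▸ Ifun_nonneg G x0
  have hF0 : Ifun G x0 / norm1d G x0 = lam0 := by rw [hx0n, div_one, hlam0]
  have hx1_le : Ifun G x1 ≤ lam0 * ∑ i, v0 i * x1 i :=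
    le_mul_of_forall_le_sub_mul_add_mul (ℓ := fun y => ∑ i, v0 i * y i) hlam
      (by rw [sum_mul_eq_norm1d_of_subgradient hv1 hv2, hx0n, mul_one, hlam0]) hGfmin hx1
  refine ⟨fun _ => hF0 ▸ Ifun_div_norm1d_le hv hlam hx1_le, fun α _ _ => ?_⟩
  rw [hF0]
  refine Ifun_div_norm1d_le hv hlam ?_
  rwa [Ifun_sub_const, sum_mul_sub_const hv4]

/-- Generalized steepest descent step: with `x⁰ ∈ π`, a subgradient `v⁰` of `‖·‖_{1,d}` at
`x⁰` with `Σ_i v⁰_i = 0`, `λ⁰ = I(x⁰)`, a convex `Gf` attaining its global minimum at `x⁰`,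
and `x¹` a global minimizer of `x ↦ I(x) − λ⁰⟨v⁰, x⟩ + λ⁰ Gf(x)`: then (provided `x¹ ≠ 0`)
`F(x¹) ≤ F(x⁰)`, and for any median `α` of `x¹` with `x¹ − α·1 ≠ 0`,
`F(x¹ − α·1) ≤ F(x⁰)`, where `F = I/‖·‖_{1,d}`. -/
theorem stmt19 {n : ℕ} (G : SimpleGraph (Fin n)) [DecidableRel G.Adj]
    (hd : ∀ i, 0 < dd G i) (x0 : Fin n → ℝ) (hx0 : x0 ∈ piSet G)
    (v0 : Fin n → ℝ)
    (hv1 : ∀ i, 0 < x0 i → v0 i = dd G i)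
    (hv2 : ∀ i, x0 i < 0 → v0 i = -dd G i)
    (hv3 : ∀ i, x0 i = 0 → |v0 i| ≤ dd G i)
    (hv4 : (∑ i, v0 i) = 0)
    (lam0 : ℝ) (hlam0 : lam0 = Ifun G x0)
    (Gf : (Fin n → ℝ) → ℝ) (hGf : ConvexOn ℝ Set.univ Gf)
    (hGfmin : ∀ y : Fin n → ℝ, Gf x0 ≤ Gf y)
    (x1 : Fin n → ℝ)
    (hx1 : ∀ y : Fin n → ℝ,
      Ifun G x1 - lam0 * (∑ i, v0 i * x1 i) + lam0 * Gf x1 ≤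
      Ifun G y - lam0 * (∑ i, v0 i * y i) + lam0 * Gf y) :
    (x1 ≠ 0 → Ifun G x1 / norm1d G x1 ≤ Ifun G x0 / norm1d G x0) ∧
    (∀ α : ℝ, (∀ t : ℝ, (∑ i, dd G i * |x1 i - α|) ≤ ∑ i, dd G i * |x1 i - t|) →
      (fun i => x1 i - α) ≠ 0 →
      Ifun G (fun i => x1 i - α) / norm1d G (fun i => x1 i - α) ≤
        Ifun G x0 / norm1d G x0) :=
  stmt19_general G x0 hx0 v0 hv1 hv2 hv3 hv4 lam0 hlam0 Gf hGfmin x1 hx1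
end
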